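/- If Presenter has a finite strategy forcing every on-line coloring algorithm to use at least c colors in an on-line graph coloring game 𝔊, then there exists a game graph of 𝔊 with chromatic number at least c, whose number of vertices equals the total number of presentation scenarios that can occur with this strategy. -/
import Mathlib


/-- The play of an on-line game: `S` is the (finite) set of presentation scenarios of a
finite Presenter strategy, `root` is the initial scenario, and `next s c` is the scenario
reached when Algorithm colors the last vertex of scenario `s` with color `c` (and `none`
if Presenter stops).  Given an Algorithm `φ : S → ℕ` (choosing a color for the last
vertex of each scenario), `play next root φ i` is the scenario after `i` rounds. -/
def play {S : Type*} (next : S → ℕ → Option S) (root : S) (φ : S → ℕ) : ℕ → Option S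
  | 0 => some root
  | i + 1 => (play next root φ i).bind fun s => next s (φ s)

/-- **Lemma (game-lower).**  Suppose Presenter has a finite strategy (with scenario set
`S`, initial scenario `root`, transition function `next`) forcing every Algorithm to use
at least `c` colors: for every `φ : S → ℕ` that colors properly along its own play
(scenarios on the play adjacent in the game graph `G` get distinct colors), at least `c`
distinct colors occur on the play.  Let `G` be the associated game graph on the scenario
set `S` (so its number of vertices is the total number of presentation scenarios), whose
edges join only scenarios comparable in the strategy forest.  Then `χ(G) ≥ c`:
`G` is not properly colorable with fewer than `c` colors. -/
theorem game_lower {S : Type*} [Fintype S] (root : S) (next : S → ℕ → Option S)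
    (G : SimpleGraph S)
    (hanc : ∀ s t : S, G.Adj s t →
      Relation.ReflTransGen (fun a b => ∃ c, next a c = some b) s t ∨
      Relation.ReflTransGen (fun a b => ∃ c, next a c = some b) t s)
    (c : ℕ)
    (hforce : ∀ φ : S → ℕ,
      (∀ i j : ℕ, ∀ s t : S, play next root φ i = some s → play next root φ j = some t →
        G.Adj s t → φ s ≠ φ t) →
      c ≤ {col : ℕ | ∃ i s, play next root φ i = some s ∧ φ s = col}.ncard) :
    ∀ m : ℕ, G.Colorable m → c ≤ m := by
  intro m ⟨C⟩
  set φ : S → ℕ := fun s => (C s).val with hφ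
  have hproper : ∀ i j : ℕ, ∀ s t : S, play next root φ i = some s →
      play next root φ j = some t → G.Adj s t → φ s ≠ φ t := by
    intro i j s t _ _ hadj h
    exact C.valid hadj (Fin.val_injective h)
  have h := hforce φ hproper
  refine h.trans ?_
  have hsub : {col : ℕ | ∃ i s, play next root φ i = some s ∧ φ s = col} ⊆ Set.Iio m := by
    rintro col ⟨i, s, -, rfl⟩
    exact (C s).isLt
  calc {col : ℕ | ∃ i s, play next root φ i = some s ∧ φ s = col}.ncard
      ≤ (Set.Iio m).ncard := Set.ncard_le_ncard hsub (Set.finite_Iio m)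
    _ = m := by
        rw [← Finset.coe_range, Set.ncard_coe_finset, Finset.card_range]
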